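/- arXiv:1802.01358 — 10 statements merged into one kernel-verified Lean document; each statement's English description precedes it below -/
import Mathlib

section
/- Let p be a prime and N ≥ 1. Let C ⊆ (ZMod p)^N be an F_p-linear code (a ZMod p-submodule of functions Fin N → ZMod p) that contains the all-one vector 𝟙 and such that any two distinct codewords have Hamming distance at least d. Let S ⊆ C be a finite set of codewords with |S| ≥ 2 such that for all distinct c, c' ∈ S, the difference c − c' is not a scalar multiple of 𝟙 (i.e., no two elements of S lie in the same coset of the span of 𝟙). For each c ∈ S define v_c ∈ ℂ^N by v_c(α) = (1/√N)·e_p(c(α)). Then every v_c is a unit vector, and for all distinct c, c' ∈ S one has |⟨v_c, v_{c'}⟩| ≤ (p·(p−1)·N − p²·d)/(2N); in particular, the coherence of the family (v_c)_{c∈S} is at most (p·(p−1)·N − p²·d)/(2N). -/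
open scoped ComplexInnerProductSpace

/-- The canonical additive character of `ZMod p`: `ep p x = exp(2πi·x̂/p)`. -/
noncomputable def ep (p : ℕ) (x : ZMod p) : ℂ :=
  Complex.exp (2 * Real.pi * Complex.I * (x.val : ℂ) / (p : ℂ))

/-!
Write `w = c' - c`. Since `𝟙 ∈ C`, the set where `w` takes the value `a` is the agreement set of
the two distinct codewords `c + a • 𝟙` and `c'`, so every value is taken at most `N - d` times.
As the character sum `∑ₐ e_p(a)` vanishes, `∑_α e_p(w α) = ∑ₐ (#{w = a} - (N - d)) e_p(a)`, whose
norm is at most `∑ₐ (N - d - #{w = a}) = p (N - d) - N`. Finally `⟪v_c, v_c'⟫ = N⁻¹ ∑_α e_p(w α)`.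
-/

open Finset

lemma ep_eq_stdAddChar (p : ℕ) [NeZero p] (x : ZMod p) : ep p x = ZMod.stdAddChar x := by
  rw [ZMod.stdAddChar_apply, ZMod.toCircle_apply]
  rfl

lemma ZMod.stdAddChar_ne_zero (n : ℕ) [NeZero n] [Nontrivial (ZMod n)] :
    (ZMod.stdAddChar : AddChar (ZMod n) ℂ) ≠ 0 := fun h =>
  one_ne_zero <| ZMod.injective_stdAddChar <| by
    rw [h, AddChar.zero_apply, AddChar.map_zero_eq_one]

theorem AddChar.norm_sum_comp_le {G ι : Type*} [AddCommGroup G] [Fintype G] [DecidableEq G]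
    [Fintype ι] {ψ : AddChar G ℂ} (hψ : ψ ≠ 0) (f : ι → G) {M : ℝ}
    (hM : ∀ a, (#{i | f i = a} : ℝ) ≤ M) :
    ‖∑ i, ψ (f i)‖ ≤ Fintype.card G * M - Fintype.card ι := by
  -- subtracting `M` from every fibre size changes nothing, because `∑ a, ψ a = 0`
  have hfiber : ∑ i, ψ (f i) = ∑ a, ((#{i | f i = a} : ℂ) - M) * ψ a := by
    simp_rw [sub_mul, sum_sub_distrib, ← mul_sum, AddChar.sum_eq_zero_iff_ne_zero.2 hψ,
      mul_zero, sub_zero, ← sum_fiberwise' univ f ψ, sum_const, nsmul_eq_mul]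
  have hcard : ∑ a, (#{i | f i = a} : ℝ) = Fintype.card ι := by
    exact_mod_cast (card_eq_sum_card_fiberwise fun i _ => mem_univ (f i)).symm
  calc ‖∑ i, ψ (f i)‖ ≤ ∑ a, ‖((#{i | f i = a} : ℂ) - M) * ψ a‖ := hfiber ▸ norm_sum_le _ _
    _ = ∑ a, (M - #{i | f i = a}) := by
        refine sum_congr rfl fun a _ => ?_
        rw [norm_mul, ψ.norm_apply, mul_one, ← Complex.ofReal_natCast, ← Complex.ofReal_sub,
          Complex.norm_real, Real.norm_of_nonpos (sub_nonpos.2 (hM a)), neg_sub]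
    _ = Fintype.card G * M - Fintype.card ι := by
        rw [sum_sub_distrib, hcard, sum_const, card_univ, nsmul_eq_mul]

lemma card_filter_eq_add_hammingDist {ι β : Type*} [Fintype ι] [DecidableEq β] (x y : ι → β) :
    #{i | x i = y i} + hammingDist x y = Fintype.card ι :=
  card_filter_add_card_filter_not _

lemma card_filter_sub_eq_add_le_card {R ι : Type*} [Ring R] [DecidableEq R] [Fintype ι]
    {C : Submodule R (ι → R)} {d : ℕ} (hone : (fun _ => 1) ∈ C)
    (hdist : ∀ c ∈ C, ∀ c' ∈ C, c ≠ c' → d ≤ hammingDist c c')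
    {c c' : ι → R} (hc : c ∈ C) (hc' : c' ∈ C) (hcoset : ∀ t : R, c - c' ≠ t • fun _ => 1)
    (a : R) : #{i | (c' - c) i = a} + d ≤ Fintype.card ι := by
  set c₂ := c + a • fun _ => (1 : R)
  have hne : c₂ ≠ c' := by
    rintro h
    refine hcoset (-a) ?_
    rw [← h, sub_add_cancel_left, neg_smul]
  have hfilter : #{i | (c' - c) i = a} = #{i | c₂ i = c' i} := by
    refine congrArg card (filter_congr fun i _ => ?_)
    simp only [c₂, Pi.sub_apply, Pi.add_apply, Pi.smul_apply, smul_eq_mul, mul_one]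
    rw [sub_eq_iff_eq_add', eq_comm]
  rw [hfilter, ← card_filter_eq_add_hammingDist c₂ c']
  exact Nat.add_le_add_left (hdist _ (C.add_mem hc (C.smul_mem a hone)) _ hc' hne) _

lemma EuclideanSpace.norm_eq_of_forall_norm_apply_eq {ι : Type*} [Fintype ι]
    {x : EuclideanSpace ℂ ι} {r : ℝ} (hr : 0 ≤ r) (hx : ∀ i, ‖x i‖ = r) :
    ‖x‖ = √(Fintype.card ι) * r := by
  simp_rw [EuclideanSpace.norm_eq, hx, sum_const, card_univ, nsmul_eq_mul,
    Real.sqrt_mul' _ (sq_nonneg r), Real.sqrt_sq hr]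

lemma inner_eq_sum_addChar {G ι : Type*} [AddCommGroup G] [Finite G] [Fintype ι]
    (ψ : AddChar G ℂ) (s : ℝ) {c c' : ι → G} {x y : EuclideanSpace ℂ ι}
    (hx : ∀ i, x i = s * ψ (c i)) (hy : ∀ i, y i = s * ψ (c' i)) :
    ⟪x, y⟫ = s ^ 2 * ∑ i, ψ ((c' - c) i) := by
  simp_rw [PiLp.inner_apply, hx, hy, mul_sum, RCLike.inner_apply, Pi.sub_apply, sub_eq_add_neg,
    AddChar.map_add_eq_mul, AddChar.map_neg_eq_conj]
  refine sum_congr rfl fun i _ => ?_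
  simp only [map_mul, Complex.conj_ofReal]
  ring

lemma div_le_coherence_bound {p N d B : ℝ} (hp : 2 ≤ p) (hN : 0 < N) (hB : 0 ≤ B)
    (h : B ≤ p * (N - d) - N) : B / N ≤ (p * (p - 1) * N - p ^ 2 * d) / (2 * N) := by
  rw [div_le_div_iff₀ hN (by positivity)]
  -- at `B = p * (N - d) - N` the gap is `N * (p - 2) * B`
  nlinarith [mul_nonneg (sub_nonneg.2 hp) (hB.trans h)]

theorem stmt0_general (p N d : ℕ) (hp : p.Prime) [NeZero p] (hN : 1 ≤ N)
    (C : Submodule (ZMod p) (Fin N → ZMod p))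
    (hone : (fun _ => (1 : ZMod p)) ∈ C)
    (hdist : ∀ c ∈ C, ∀ c' ∈ C, c ≠ c' → d ≤ hammingDist c c')
    (S : Finset (Fin N → ZMod p)) (hSC : ↑S ⊆ (C : Set (Fin N → ZMod p)))
    (hcoset : ∀ c ∈ S, ∀ c' ∈ S, c ≠ c' →
      ∀ t : ZMod p, c - c' ≠ t • (fun _ => (1 : ZMod p)))
    (v : (Fin N → ZMod p) → EuclideanSpace ℂ (Fin N))
    (hv : ∀ c, v c = fun α => ((1 / Real.sqrt N : ℝ) : ℂ) * ep p (c α)) :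
    (∀ c ∈ S, ‖v c‖ = 1) ∧
    ∀ c ∈ S, ∀ c' ∈ S, c ≠ c' →
      ‖⟪v c, v c'⟫‖ ≤ ((p : ℝ) * ((p : ℝ) - 1) * N - (p : ℝ) ^ 2 * d) / (2 * N) := by
  have : Fact p.Prime := ⟨hp⟩
  have hNpos : (0 : ℝ) < N := by exact_mod_cast hN
  have hcoord (c : Fin N → ZMod p) (α : Fin N) :
      v c α = ((1 / √N : ℝ) : ℂ) * ZMod.stdAddChar (c α) := by
    simp only [hv, ep_eq_stdAddChar]
  refine ⟨fun c _ => ?_, fun c hc c' hc' hne => ?_⟩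
  · rw [EuclideanSpace.norm_eq_of_forall_norm_apply_eq (r := 1 / √N) (by positivity) fun α => by
      rw [hcoord, norm_mul, AddChar.norm_apply, mul_one, Complex.norm_real,
        Real.norm_of_nonneg (by positivity)]]
    simp [hNpos.ne']
  · have hfiber (a : ZMod p) : (#{α | (c' - c) α = a} : ℝ) ≤ N - d := by
      have := card_filter_sub_eq_add_le_card hone hdist (hSC hc) (hSC hc')
        (hcoset c hc c' hc' hne) a
      rw [Fintype.card_fin] at this
      rw [le_sub_iff_add_le]
      exact_mod_cast this
    have hsum := AddChar.norm_sum_comp_le (ZMod.stdAddChar_ne_zero p) (c' - c) hfiber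
    rw [ZMod.card, Fintype.card_fin] at hsum
    rw [inner_eq_sum_addChar _ _ (hcoord c) (hcoord c'), norm_mul, ← Complex.ofReal_pow,
      Complex.norm_real, div_pow, one_pow, Real.sq_sqrt hNpos.le,
      Real.norm_of_nonneg (by positivity), one_div_mul_eq_div]
    exact div_le_coherence_bound (by exact_mod_cast hp.two_le) hNpos (norm_nonneg _) hsum

theorem stmt0 (p N d : ℕ) (hp : p.Prime) [NeZero p] (hN : 1 ≤ N)
    (C : Submodule (ZMod p) (Fin N → ZMod p))
    (hone : (fun _ => (1 : ZMod p)) ∈ C)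
    (hdist : ∀ c ∈ C, ∀ c' ∈ C, c ≠ c' → d ≤ hammingDist c c')
    (S : Finset (Fin N → ZMod p)) (hSC : ↑S ⊆ (C : Set (Fin N → ZMod p)))
    (hcard : 2 ≤ S.card)
    (hcoset : ∀ c ∈ S, ∀ c' ∈ S, c ≠ c' →
      ∀ t : ZMod p, c - c' ≠ t • (fun _ => (1 : ZMod p)))
    (v : (Fin N → ZMod p) → EuclideanSpace ℂ (Fin N))
    (hv : ∀ c, v c = fun α => ((1 / Real.sqrt N : ℝ) : ℂ) * ep p (c α)) :
    (∀ c ∈ S, ‖v c‖ = 1) ∧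
    ∀ c ∈ S, ∀ c' ∈ S, c ≠ c' →
      ‖⟪v c, v c'⟫‖ ≤ ((p : ℝ) * ((p : ℝ) - 1) * N - (p : ℝ) ^ 2 * d) / (2 * N) :=
  stmt0_general p N d hp hN C hone hdist S hSC hcoset v hv
end

section
/- Let p be a prime, k, k' ≥ 1, and let F be the finite field GF(p^k) with p^k elements. Let φ : F → (Fin N → ZMod p) be an injective F_p-linear map such that φ(1) is the all-one vector of length N and such that for all x ≠ y in F, the vectors φ(x) and φ(y) have Hamming distance at least d. Let C' ⊆ (Fin N' → F) be an F-linear code that contains the all-one vector of length N' and such that any two distinct codewords of C' have Hamming distance at least d'. Define Ψ(c) : Fin N' × Fin N → ZMod p by Ψ(c)(s, t) = φ(c(s))(t). Then the image set D = {Ψ(c) : c ∈ C'} is an F_p-linear subspace (ZMod p-submodule) of functions Fin N' × Fin N → ZMod p, D contains the all-one vector of length N·N', and any two distinct elements of D have Hamming distance at least N·N' − ((N' − d')·N + d'·(N − d)). -/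
theorem stmt1 (p k k' N N' d d' : ℕ) (hp : p.Prime) [Fact p.Prime]
    (hk : 1 ≤ k) (hk' : 1 ≤ k') [DecidableEq (GaloisField p k)]
    (φ : GaloisField p k →ₗ[ZMod p] (Fin N → ZMod p))
    (hφinj : Function.Injective φ)
    (hφone : φ 1 = fun _ => (1 : ZMod p))
    (hφdist : ∀ x y : GaloisField p k, x ≠ y → d ≤ hammingDist (φ x) (φ y))
    (C' : Submodule (GaloisField p k) (Fin N' → GaloisField p k))
    (hone : (fun _ => (1 : GaloisField p k)) ∈ C')
    (hdist : ∀ c ∈ C', ∀ c'' ∈ C', c ≠ c'' → d' ≤ hammingDist c c'')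
    (Ψ : (Fin N' → GaloisField p k) → (Fin N' × Fin N → ZMod p))
    (hΨ : ∀ c, Ψ c = fun st => φ (c st.1) st.2) :
    (∃ D : Submodule (ZMod p) (Fin N' × Fin N → ZMod p),
      (D : Set (Fin N' × Fin N → ZMod p)) = Ψ '' (C' : Set (Fin N' → GaloisField p k))) ∧
    (fun _ => (1 : ZMod p)) ∈ Ψ '' (C' : Set (Fin N' → GaloisField p k)) ∧
    ∀ w ∈ Ψ '' (C' : Set (Fin N' → GaloisField p k)),
      ∀ w' ∈ Ψ '' (C' : Set (Fin N' → GaloisField p k)), w ≠ w' →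
        (N : ℤ) * N' - (((N' : ℤ) - d') * N + (d' : ℤ) * ((N : ℤ) - d)) ≤
          (hammingDist w w' : ℤ) := by
  classical
  refine ⟨?_, ?_, ?_⟩
  · let L : (Fin N' → GaloisField p k) →ₗ[ZMod p] (Fin N' × Fin N → ZMod p) :=
      { toFun := fun c => fun st => φ (c st.1) st.2
        map_add' := by intro a b; funext st; simp
        map_smul' := by intro m a; funext st; simp }
    refine ⟨Submodule.map L (C'.restrictScalars (ZMod p)), ?_⟩
    ext w
    constructor
    · rintro ⟨c, hc, rfl⟩
      exact ⟨c, hc, hΨ c⟩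
    · rintro ⟨c, hc, rfl⟩
      exact ⟨c, hc, (hΨ c).symm⟩
  · refine ⟨fun _ => 1, hone, ?_⟩
    rw [hΨ]
    funext st
    simp [hφone]
  · rintro w ⟨c, hc, rfl⟩ w' ⟨c'', hc'', rfl⟩ hne
    have hcc : c ≠ c'' := by rintro rfl; exact hne rfl
    have key : d * d' ≤ hammingDist (Ψ c) (Ψ c'') := by
      rw [hΨ c, hΨ c'', hammingDist, Finset.card_filter, Fintype.sum_prod_type]
      have step1 : ∀ s : Fin N', (if c s ≠ c'' s then d else 0) ≤
          ∑ t : Fin N, if φ (c s) t ≠ φ (c'' s) t then 1 else 0 := by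
        intro s
        by_cases h : c s ≠ c'' s
        · rw [if_pos h]
          have := hφdist _ _ h
          rwa [hammingDist, Finset.card_filter] at this
        · simp [h]
      calc d * d' = d' * d := Nat.mul_comm _ _
        _ ≤ (Finset.univ.filter fun s => c s ≠ c'' s).card * d := by
            have := hdist c hc c'' hc'' hcc
            rw [hammingDist] at this
            exact Nat.mul_le_mul_right _ this
        _ = ∑ s : Fin N', (if c s ≠ c'' s then d else 0) := by
            rw [← Finset.sum_filter, Finset.sum_const, smul_eq_mul]
        _ ≤ _ := Finset.sum_le_sum fun s _ => step1 s
    have h2 : (N : ℤ) * N' - (((N' : ℤ) - d') * N + (d' : ℤ) * ((N : ℤ) - d))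
        = (d : ℤ) * d' := by ring
    rw [h2]
    exact_mod_cast key
end

section
/- Let Y be a type, F a type, and φ : F → (Fin N → Y) a map such that for all x ≠ y in F, the vectors φ(x) and φ(y) agree in at most N − d coordinates (where 0 ≤ d ≤ N). Let c, c' : Fin N' → F be two maps that agree in at most N' − d' coordinates (where 0 ≤ d' ≤ N'). Then the maps Fin N' × Fin N → Y given by (s,t) ↦ φ(c(s))(t) and (s,t) ↦ φ(c'(s))(t) agree in at most (N' − d')·N + d'·(N − d) coordinates; equivalently, their Hamming distance is at least N·N' − ((N' − d')·N + d'·(N − d)). -/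
theorem stmt2 {Y F : Type*} [DecidableEq Y] [DecidableEq F]
    (N N' d d' : ℕ) (hd : d ≤ N) (hd' : d' ≤ N')
    (φ : F → (Fin N → Y))
    (hφ : ∀ x y : F, x ≠ y →
      (Finset.univ.filter fun t : Fin N => φ x t = φ y t).card ≤ N - d)
    (c c' : Fin N' → F)
    (hc : (Finset.univ.filter fun s : Fin N' => c s = c' s).card ≤ N' - d') :
    (Finset.univ.filter fun st : Fin N' × Fin N =>
        φ (c st.1) st.2 = φ (c' st.1) st.2).card ≤ (N' - d') * N + d' * (N - d) ∧
    N * N' - ((N' - d') * N + d' * (N - d)) ≤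
      hammingDist (fun st : Fin N' × Fin N => φ (c st.1) st.2)
        (fun st : Fin N' × Fin N => φ (c' st.1) st.2) := by
  have key : (Finset.univ.filter fun st : Fin N' × Fin N =>
      φ (c st.1) st.2 = φ (c' st.1) st.2).card
      = ∑ s : Fin N', (Finset.univ.filter fun t : Fin N => φ (c s) t = φ (c' s) t).card := by
    rw [Finset.card_filter, Fintype.sum_prod_type]
    exact Finset.sum_congr rfl fun s _ => (Finset.card_filter _ _).symm
  have main : (Finset.univ.filter fun st : Fin N' × Fin N =>
      φ (c st.1) st.2 = φ (c' st.1) st.2).card ≤ (N' - d') * N + d' * (N - d) := by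
    rw [key]
    set A := Finset.univ.filter fun s : Fin N' => c s = c' s with hA
    set B := Finset.univ.filter fun s : Fin N' => ¬ c s = c' s with hB
    have hsplit : ∑ s ∈ A, (Finset.univ.filter fun t : Fin N => φ (c s) t = φ (c' s) t).card
        + ∑ s ∈ B, (Finset.univ.filter fun t : Fin N => φ (c s) t = φ (c' s) t).card
        = ∑ s : Fin N', (Finset.univ.filter fun t : Fin N => φ (c s) t = φ (c' s) t).card :=
      Finset.sum_filter_add_sum_filter_not _ _ _
    have hAle : ∑ s ∈ A, (Finset.univ.filter fun t : Fin N => φ (c s) t = φ (c' s) t).card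
        ≤ A.card * N := by
      apply Finset.sum_le_card_nsmul
      intro s _
      simpa using Finset.card_filter_le Finset.univ (fun t : Fin N => φ (c s) t = φ (c' s) t)
    have hBle : ∑ s ∈ B, (Finset.univ.filter fun t : Fin N => φ (c s) t = φ (c' s) t).card
        ≤ B.card * (N - d) := by
      apply Finset.sum_le_card_nsmul
      intro s hs
      simp only [hB, Finset.mem_filter] at hs
      exact hφ _ _ hs.2
    have hcard : A.card + B.card = N' := by
      rw [hA, hB]
      simpa using Finset.card_filter_add_card_filter_not
        (s := (Finset.univ : Finset (Fin N'))) (p := fun s => c s = c' s)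
    -- arithmetic
    set a := A.card
    set b := B.card
    set e := N - d with he
    have hN : N = d + e := by omega
    have haf : a ≤ N' - d' := hc
    have h1 : a * d ≤ (N' - d') * d := Nat.mul_le_mul_right d haf
    have h2 : a * N + b * e = a * d + N' * e := by
      rw [hN, ← hcard]; ring
    have h3 : (N' - d') * N + d' * e = (N' - d') * d + N' * e := by
      rw [hN]
      have : N' - d' + d' = N' := by omega
      nlinarith [this]
    calc ∑ s : Fin N', (Finset.univ.filter fun t : Fin N => φ (c s) t = φ (c' s) t).card
        = ∑ s ∈ A, (Finset.univ.filter fun t : Fin N => φ (c s) t = φ (c' s) t).card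
          + ∑ s ∈ B, (Finset.univ.filter fun t : Fin N => φ (c s) t = φ (c' s) t).card := hsplit.symm
      _ ≤ a * N + b * e := Nat.add_le_add hAle hBle
      _ = a * d + N' * e := h2
      _ ≤ (N' - d') * d + N' * e := by omega
      _ = (N' - d') * N + d' * e := h3.symm
  refine ⟨main, ?_⟩
  have hdist : hammingDist (fun st : Fin N' × Fin N => φ (c st.1) st.2)
      (fun st : Fin N' × Fin N => φ (c' st.1) st.2)
      = (Finset.univ.filter fun st : Fin N' × Fin N =>
          ¬ φ (c st.1) st.2 = φ (c' st.1) st.2).card := rfl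
  have htot : (Finset.univ.filter fun st : Fin N' × Fin N =>
      φ (c st.1) st.2 = φ (c' st.1) st.2).card
      + (Finset.univ.filter fun st : Fin N' × Fin N =>
      ¬ φ (c st.1) st.2 = φ (c' st.1) st.2).card = N * N' := by
    have := Finset.card_filter_add_card_filter_not
      (s := (Finset.univ : Finset (Fin N' × Fin N)))
      (p := fun st => φ (c st.1) st.2 = φ (c' st.1) st.2)
    simpa [Nat.mul_comm] using this
  omega
end

section
/- Let p ≥ 3 be a prime. Define the complex matrix C'' of size p(p−1) × p³ whose rows are indexed by pairs (φ, γ) with φ ∈ ZMod p \ {−1} and γ ∈ ZMod p, and whose columns are indexed by triples (a, b, c) ∈ (ZMod p)³, with entries C''((φ,γ), (a,b,c)) = (1/√(p(p−1)))·e_p(γ·(a·φ + c) + b·φ). Then every column of C'' is a unit vector in ℂ^{p(p−1)}, and the coherence of C'' equals 1/(p−1). -/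
/-!
Write `ψ = e_p` and `Δ = q' - q = (Δa, Δb, Δc)`. Since `conj (ψ x) * ψ y = ψ (y - x)`, the inner
product of the columns `q` and `q'` is `(p (p - 1))⁻¹ ∑_{φ ≠ -1} ψ (Δb φ) ∑_γ ψ (γ (Δa φ + Δc))`,
and orthogonality of characters collapses the inner sum to `p · [Δa φ + Δc = 0]`. What remains is
`(p - 1)⁻¹` times a sum of unimodular terms over the roots `φ ≠ -1` of `Δa φ + Δc`. For `Δ = 0`
this is `1`. If `Δa ≠ 0` there is at most one root, and if `Δa = 0 ≠ Δc` there is none. If only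
`Δb ≠ 0`, every `φ ≠ -1` is a root and the sum is `∑_{φ ≠ -1} ψ (Δb φ) = -ψ (-Δb)`, of modulus
one, which shows that the bound `1 / (p - 1)` is attained.
-/

open scoped ComplexInnerProductSpace

open Finset

namespace AddChar

variable {F : Type*} [Field F] [Fintype F] [DecidableEq F] (ψ : AddChar F ℂ)

lemma sum_subtype_ne_mul (hψ : ψ.IsPrimitive) {d : F} (hd : d ≠ 0) (x₀ : F) :
    ∑ x : {x : F // x ≠ x₀}, ψ (d * x) = -ψ (d * x₀) := by
  have htotal : ∑ x, ψ (x * d) = 0 := by simp [sum_mulShift d hψ, hd]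
  rw [Fintype.sum_eq_add_sum_subtype_ne _ x₀, add_comm, add_eq_zero_iff_eq_neg] at htotal
  simpa only [mul_comm d] using htotal

lemma sum_conj_mul_affine (hψ : ψ.IsPrimitive) (u w u' w' : F) :
    ∑ γ, starRingEnd ℂ (ψ (γ * u + w)) * ψ (γ * u' + w') =
      if u' - u = 0 then (Fintype.card F : ℂ) * ψ (w' - w) else 0 := by
  have hsplit : ∀ γ, -(γ * u + w) + (γ * u' + w') = γ * (u' - u) + (w' - w) := fun γ ↦ by ring
  simp_rw [← map_neg_eq_conj, ← map_add_eq_mul, hsplit, map_add_eq_mul, ← sum_mul,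
    sum_mulShift _ hψ]
  split_ifs <;> simp

end AddChar

section CharColumns

variable {F : Type*} [Field F] [Fintype F] [DecidableEq F] (ψ : AddChar F ℂ)

noncomputable def charColumn (x₀ : F) (q : F × F × F) :
    EuclideanSpace ℂ ({φ : F // φ ≠ x₀} × F) :=
  WithLp.toLp 2 fun φγ ↦ ψ (φγ.2 * (q.1 * φγ.1 + q.2.2) + q.2.1 * φγ.1)

noncomputable def charColumnGram (x₀ : F) (d : F × F × F) : ℂ :=
  ∑ φ : {φ : F // φ ≠ x₀}, if d.1 * φ + d.2.2 = 0 then ψ (d.2.1 * φ) else 0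

lemma inner_charColumn (hψ : ψ.IsPrimitive) (x₀ : F) (q q' : F × F × F) :
    ⟪charColumn ψ x₀ q, charColumn ψ x₀ q'⟫ =
      Fintype.card F * charColumnGram ψ x₀ (q' - q) := by
  simp only [charColumn, PiLp.inner_apply, RCLike.inner_apply, mul_comm (ψ _),
    Fintype.sum_prod_type, ψ.sum_conj_mul_affine hψ, add_sub_add_comm, charColumnGram,
    Prod.fst_sub, Prod.snd_sub, sub_mul, mul_sum, mul_ite, mul_zero]

lemma charColumnGram_zero (x₀ : F) : charColumnGram ψ x₀ 0 = Fintype.card F - 1 := by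
  simp [charColumnGram, Fintype.card_subtype_compl, Nat.cast_sub Fintype.card_pos]

lemma charColumnGram_zero_b_zero (hψ : ψ.IsPrimitive) {b : F} (hb : b ≠ 0) (x₀ : F) :
    charColumnGram ψ x₀ (0, b, 0) = -ψ (b * x₀) := by
  simpa [charColumnGram] using ψ.sum_subtype_ne_mul hψ hb x₀

lemma norm_charColumnGram_le_one (hψ : ψ.IsPrimitive) (x₀ : F) {d : F × F × F} (hd : d ≠ 0) :
    ‖charColumnGram ψ x₀ d‖ ≤ 1 := by
  obtain ⟨a, b, c⟩ := d
  by_cases ha : a = 0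
  · subst ha
    by_cases hc : c = 0
    · subst hc
      have hb : b ≠ 0 := by rintro rfl; exact hd rfl
      rw [charColumnGram_zero_b_zero ψ hψ hb, norm_neg, ψ.norm_apply]
    · simp [charColumnGram, hc]
  · have hroots : #{φ : {φ : F // φ ≠ x₀} | a * φ + c = 0} ≤ 1 :=
      card_le_one.mpr fun x hx y hy ↦ Subtype.ext <| mul_left_cancel₀ ha <|
        by simp only [mem_filter] at hx hy; linear_combination hx.2 - hy.2
    calc ‖charColumnGram ψ x₀ (a, b, c)‖
        ≤ ∑ φ : {φ : F // φ ≠ x₀}, ‖if a * φ + c = 0 then ψ (b * φ) else 0‖ :=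
          norm_sum_le _ _
      _ = #{φ : {φ : F // φ ≠ x₀} | a * φ + c = 0} := by
        simp [apply_ite norm, ψ.norm_apply, sum_boole]
      _ ≤ 1 := mod_cast hroots

noncomputable def unitCharColumn (x₀ : F) (q : F × F × F) :
    EuclideanSpace ℂ ({φ : F // φ ≠ x₀} × F) :=
  ((1 / Real.sqrt (Fintype.card F * (Fintype.card F - 1)) : ℝ) : ℂ) • charColumn ψ x₀ q

omit [DecidableEq F] in
lemma card_sub_one_pos : (0 : ℝ) < Fintype.card F - 1 := by
  linarith [(Nat.one_lt_cast (α := ℝ)).mpr (Fintype.one_lt_card (α := F))]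

lemma inner_unitCharColumn (hψ : ψ.IsPrimitive) (x₀ : F) (q q' : F × F × F) :
    ⟪unitCharColumn ψ x₀ q, unitCharColumn ψ x₀ q'⟫ =
      ((Fintype.card F - 1 : ℝ) : ℂ)⁻¹ * charColumnGram ψ x₀ (q' - q) := by
  have hscale : (1 / Real.sqrt (Fintype.card F * (Fintype.card F - 1))) ^ 2 * Fintype.card F =
      (Fintype.card F - 1 : ℝ)⁻¹ := by
    have := card_sub_one_pos (F := F)
    rw [div_pow, Real.sq_sqrt (by positivity)]
    field_simp
  rw [unitCharColumn, unitCharColumn, inner_smul_left, inner_smul_right, inner_charColumn _ hψ,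
    Complex.conj_ofReal, ← Complex.ofReal_inv, ← hscale]
  push_cast
  ring

lemma norm_unitCharColumn (hψ : ψ.IsPrimitive) (x₀ : F) (q : F × F × F) :
    ‖unitCharColumn ψ x₀ q‖ = 1 := by
  have hself := inner_unitCharColumn ψ hψ x₀ q q
  rw [sub_self, charColumnGram_zero, ← Complex.ofReal_natCast, ← Complex.ofReal_one,
    ← Complex.ofReal_sub, inv_mul_cancel₀ (Complex.ofReal_ne_zero.mpr card_sub_one_pos.ne')]
    at hself
  rw [norm_eq_sqrt_re_inner (𝕜 := ℂ), hself, RCLike.one_re, Real.sqrt_one]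

end CharColumns

theorem stmt6_general (p : ℕ) (hp : p.Prime) [NeZero p]
    (v : ZMod p × ZMod p × ZMod p →
      EuclideanSpace ℂ ({φ : ZMod p // φ ≠ -1} × ZMod p))
    (hv : ∀ a b c : ZMod p, v (a, b, c) =
      WithLp.toLp 2 (fun φγ => ((1 / Real.sqrt (p * (p - 1)) : ℝ) : ℂ) *
        ep p (φγ.2 * (a * (φγ.1 : ZMod p) + c) + b * (φγ.1 : ZMod p)))) :
    (∀ q, ‖v q‖ = 1) ∧
    (∀ q q', q ≠ q' → ‖⟪v q, v q'⟫‖ ≤ 1 / ((p : ℝ) - 1)) ∧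
    (∃ q q', q ≠ q' ∧ ‖⟪v q, v q'⟫‖ = 1 / ((p : ℝ) - 1)) := by
  have : Fact p.Prime := ⟨hp⟩
  have hψ := ZMod.isPrimitive_stdAddChar p
  have hv' : ∀ q, v q = unitCharColumn ZMod.stdAddChar (-1) q := by
    rintro ⟨a, b, c⟩
    ext
    simp [hv, unitCharColumn, charColumn, ep_eq_stdAddChar, ZMod.card]
  have hp1 : (0 : ℝ) < p - 1 := by simpa only [ZMod.card] using card_sub_one_pos (F := ZMod p)
  have hnorm : ∀ q q',
      ‖⟪v q, v q'⟫‖ = ‖charColumnGram ZMod.stdAddChar (-1) (q' - q)‖ / (p - 1) := by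
    intro q q'
    rw [hv', hv', inner_unitCharColumn _ hψ, norm_mul, norm_inv, Complex.norm_real, ZMod.card,
      Real.norm_of_nonneg hp1.le, inv_mul_eq_div]
  refine ⟨fun q ↦ ?_, fun q q' hne ↦ ?_, ⟨0, (0, 1, 0), by simp [Prod.ext_iff], ?_⟩⟩
  · rw [hv']
    exact norm_unitCharColumn _ hψ _ q
  · rw [hnorm]
    exact div_le_div_of_nonneg_right
      (norm_charColumnGram_le_one _ hψ _ (sub_ne_zero.mpr hne.symm)) hp1.le
  · rw [hnorm, sub_zero, charColumnGram_zero_b_zero _ hψ one_ne_zero, norm_neg,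
      AddChar.norm_apply]

theorem stmt6 (p : ℕ) (hp : p.Prime) (hp3 : 3 ≤ p) [NeZero p]
    (v : ZMod p × ZMod p × ZMod p →
      EuclideanSpace ℂ ({φ : ZMod p // φ ≠ -1} × ZMod p))
    (hv : ∀ a b c : ZMod p, v (a, b, c) =
      WithLp.toLp 2 (fun φγ => ((1 / Real.sqrt (p * (p - 1)) : ℝ) : ℂ) *
        ep p (φγ.2 * (a * (φγ.1 : ZMod p) + c) + b * (φγ.1 : ZMod p)))) :
    (∀ q, ‖v q‖ = 1) ∧
    (∀ q q', q ≠ q' → ‖⟪v q, v q'⟫‖ ≤ 1 / ((p : ℝ) - 1)) ∧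
    (∃ q q', q ≠ q' ∧ ‖⟪v q, v q'⟫‖ = 1 / ((p : ℝ) - 1)) :=
  stmt6_general p hp v hv
end

section
/- Let A be an m × n complex matrix and B an m' × n' complex matrix with m, m' ≥ 1 and n, n' ≥ 2, all of whose columns are nonzero. Let A ⊗ B denote the Kronecker product, the (m·m') × (n·n') matrix with entries (A ⊗ B)((r,r'), (j,j')) = A(r,j)·B(r',j'), whose column indexed by (j,j') is the Kronecker product of the j-th column of A and the j'-th column of B. Then the coherence of A ⊗ B equals max(μ_A, μ_B), where μ_A and μ_B are the coherences of A and B respectively. -/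
open scoped ComplexInnerProductSpace InnerProductSpace

/-!
The column of `A ⊗ B` indexed by `(j, j')` is the Kronecker product of the columns `a j` and `b j'`,
and both the inner product and the norm are multiplicative on Kronecker products. Hence the
normalized inner products of `A ⊗ B` are the products of those of `A` and of `B`. Since each factor
is at most `1`, and equals `1` on the diagonal, a pair of distinct columns of `A ⊗ B` scores at
most `μA` when their `A`-indices differ and at most `μB` when they agree. Conversely, pairing a
column of `B` with itself turns a maximizing pair of columns of `A` into a pair of columns of
`A ⊗ B` with the same score, and symmetrically.
-/

section AbsCos

variable (𝕜 : Type*) {E : Type*} [RCLike 𝕜] [NormedAddCommGroup E] [InnerProductSpace 𝕜 E]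

noncomputable def absCos (x y : E) : ℝ := ‖⟪x, y⟫_𝕜‖ / (‖x‖ * ‖y‖)

variable {𝕜}

theorem absCos_nonneg (x y : E) : 0 ≤ absCos 𝕜 x y := by
  unfold absCos; positivity

theorem absCos_le_one (x y : E) : absCos 𝕜 x y ≤ 1 :=
  div_le_one_of_le₀ (norm_inner_le_norm x y) (by positivity)

theorem absCos_self {x : E} (hx : x ≠ 0) : absCos 𝕜 x x = 1 := by
  rw [absCos, inner_self_eq_norm_sq_to_K, norm_pow, RCLike.norm_ofReal, abs_norm, sq, div_self]
  exact mul_self_ne_zero.mpr (norm_ne_zero_iff.mpr hx)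

end AbsCos

namespace EuclideanSpace

variable {𝕜 : Type*} [RCLike 𝕜] {α β : Type*} [Fintype α] [Fintype β]

def kronecker (x : EuclideanSpace 𝕜 α) (y : EuclideanSpace 𝕜 β) : EuclideanSpace 𝕜 (α × β) :=
  WithLp.toLp 2 fun p => x p.1 * y p.2

theorem inner_kronecker (x x' : EuclideanSpace 𝕜 α) (y y' : EuclideanSpace 𝕜 β) :
    ⟪kronecker x y, kronecker x' y'⟫_𝕜 = ⟪x, x'⟫_𝕜 * ⟪y, y'⟫_𝕜 := by
  simp only [kronecker, PiLp.inner_apply, RCLike.inner_apply,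
    Fintype.sum_prod_type, Finset.sum_mul_sum, map_mul]
  exact Finset.sum_congr rfl fun _ _ => Finset.sum_congr rfl fun _ _ => by ring

theorem norm_kronecker (x : EuclideanSpace 𝕜 α) (y : EuclideanSpace 𝕜 β) :
    ‖kronecker x y‖ = ‖x‖ * ‖y‖ := by
  simp only [EuclideanSpace.norm_eq, kronecker, Fintype.sum_prod_type,
    norm_mul, mul_pow, ← Finset.sum_mul_sum]
  exact Real.sqrt_mul (by positivity) _

theorem absCos_kronecker (x x' : EuclideanSpace 𝕜 α) (y y' : EuclideanSpace 𝕜 β) :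
    absCos 𝕜 (kronecker x y) (kronecker x' y') = absCos 𝕜 x x' * absCos 𝕜 y y' := by
  rw [absCos, inner_kronecker, norm_mul, norm_kronecker, norm_kronecker, absCos, absCos,
    div_mul_div_comm, mul_mul_mul_comm]

theorem absCos_kronecker_right_self (x x' : EuclideanSpace 𝕜 α) {y : EuclideanSpace 𝕜 β}
    (hy : y ≠ 0) : absCos 𝕜 (kronecker x y) (kronecker x' y) = absCos 𝕜 x x' := by
  rw [absCos_kronecker, absCos_self hy, mul_one]

theorem absCos_kronecker_left_self {x : EuclideanSpace 𝕜 α} (hx : x ≠ 0)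
    (y y' : EuclideanSpace 𝕜 β) : absCos 𝕜 (kronecker x y) (kronecker x y') = absCos 𝕜 y y' := by
  rw [absCos_kronecker, absCos_self hx, one_mul]

theorem absCos_kronecker_le_max {ι κ : Type*} {a : ι → EuclideanSpace 𝕜 α}
    {b : κ → EuclideanSpace 𝕜 β} (ha0 : ∀ i, a i ≠ 0) {μA μB : ℝ}
    (hμA : ∀ i j, i ≠ j → absCos 𝕜 (a i) (a j) ≤ μA)
    (hμB : ∀ k l, k ≠ l → absCos 𝕜 (b k) (b l) ≤ μB) {q q' : ι × κ} (hne : q ≠ q') :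
    absCos 𝕜 (kronecker (a q.1) (b q.2)) (kronecker (a q'.1) (b q'.2)) ≤ max μA μB := by
  obtain ⟨i, k⟩ := q
  obtain ⟨j, l⟩ := q'
  by_cases hij : i = j
  · subst hij
    have hkl : k ≠ l := fun h => hne (h ▸ rfl)
    rw [absCos_kronecker_left_self (ha0 i)]
    exact (hμB k l hkl).trans (le_max_right _ _)
  · calc absCos 𝕜 (kronecker (a i) (b k)) (kronecker (a j) (b l))
        = absCos 𝕜 (a i) (a j) * absCos 𝕜 (b k) (b l) := absCos_kronecker _ _ _ _
      _ ≤ absCos 𝕜 (a i) (a j) := mul_le_of_le_one_right (absCos_nonneg _ _) (absCos_le_one _ _)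
      _ ≤ max μA μB := (hμA i j hij).trans (le_max_left _ _)

end EuclideanSpace

theorem stmt7_general (m n m' n' : ℕ)
    (a : Fin n → EuclideanSpace ℂ (Fin m)) (b : Fin n' → EuclideanSpace ℂ (Fin m'))
    (ha0 : ∀ j, a j ≠ 0) (hb0 : ∀ j, b j ≠ 0)
    (μA μB : ℝ)
    (hμA : ∀ i j : Fin n, i ≠ j → ‖⟪a i, a j⟫‖ / (‖a i‖ * ‖a j‖) ≤ μA)
    (hμA' : ∃ i j : Fin n, i ≠ j ∧ ‖⟪a i, a j⟫‖ / (‖a i‖ * ‖a j‖) = μA)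
    (hμB : ∀ i j : Fin n', i ≠ j → ‖⟪b i, b j⟫‖ / (‖b i‖ * ‖b j‖) ≤ μB)
    (hμB' : ∃ i j : Fin n', i ≠ j ∧ ‖⟪b i, b j⟫‖ / (‖b i‖ * ‖b j‖) = μB)
    (c : Fin n × Fin n' → EuclideanSpace ℂ (Fin m × Fin m'))
    (hc : ∀ j j', c (j, j') = WithLp.toLp 2 (fun rr : Fin m × Fin m' => a j rr.1 * b j' rr.2)) :
    (∀ q q' : Fin n × Fin n', q ≠ q' →
      ‖⟪c q, c q'⟫‖ / (‖c q‖ * ‖c q'‖) ≤ max μA μB) ∧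
    (∃ q q' : Fin n × Fin n', q ≠ q' ∧
      ‖⟪c q, c q'⟫‖ / (‖c q‖ * ‖c q'‖) = max μA μB) := by
  have hc' : ∀ q : Fin n × Fin n', c q = EuclideanSpace.kronecker (a q.1) (b q.2) :=
    fun q => hc q.1 q.2
  refine ⟨fun q q' hne => ?_, ?_⟩
  · rw [hc', hc']
    exact EuclideanSpace.absCos_kronecker_le_max ha0 hμA hμB hne
  rcases le_total μB μA with hle | hle
  · obtain ⟨i, j, hij, rfl⟩ := hμA'
    obtain ⟨k, -⟩ := hμB'
    refine ⟨(i, k), (j, k), fun h => hij congr(($h).1), ?_⟩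
    rw [hc', hc', max_eq_left hle]
    exact EuclideanSpace.absCos_kronecker_right_self _ _ (hb0 k)
  · obtain ⟨k, l, hkl, rfl⟩ := hμB'
    obtain ⟨i, -⟩ := hμA'
    refine ⟨(i, k), (i, l), fun h => hkl congr(($h).2), ?_⟩
    rw [hc', hc', max_eq_right hle]
    exact EuclideanSpace.absCos_kronecker_left_self (ha0 i) _ _

theorem stmt7 (m n m' n' : ℕ) (hm : 1 ≤ m) (hm' : 1 ≤ m') (hn : 2 ≤ n) (hn' : 2 ≤ n')
    (a : Fin n → EuclideanSpace ℂ (Fin m)) (b : Fin n' → EuclideanSpace ℂ (Fin m'))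
    (ha0 : ∀ j, a j ≠ 0) (hb0 : ∀ j, b j ≠ 0)
    (μA μB : ℝ)
    (hμA : ∀ i j : Fin n, i ≠ j → ‖⟪a i, a j⟫‖ / (‖a i‖ * ‖a j‖) ≤ μA)
    (hμA' : ∃ i j : Fin n, i ≠ j ∧ ‖⟪a i, a j⟫‖ / (‖a i‖ * ‖a j‖) = μA)
    (hμB : ∀ i j : Fin n', i ≠ j → ‖⟪b i, b j⟫‖ / (‖b i‖ * ‖b j‖) ≤ μB)
    (hμB' : ∃ i j : Fin n', i ≠ j ∧ ‖⟪b i, b j⟫‖ / (‖b i‖ * ‖b j‖) = μB)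
    (c : Fin n × Fin n' → EuclideanSpace ℂ (Fin m × Fin m'))
    (hc : ∀ j j', c (j, j') = WithLp.toLp 2 (fun rr : Fin m × Fin m' => a j rr.1 * b j' rr.2)) :
    (∀ q q' : Fin n × Fin n', q ≠ q' →
      ‖⟪c q, c q'⟫‖ / (‖c q‖ * ‖c q'‖) ≤ max μA μB) ∧
    (∃ q q' : Fin n × Fin n', q ≠ q' ∧
      ‖⟪c q, c q'⟫‖ / (‖c q‖ * ‖c q'‖) = max μA μB) :=
  stmt7_general m n m' n' a b ha0 hb0 μA μB hμA hμA' hμB hμB' c hc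
end

section
/- Let A be an m × n complex matrix whose columns a_1, …, a_n are unit vectors, and let 0 ≤ μ ≤ 1 satisfy |⟨a_i, a_j⟩| ≤ μ for all i ≠ j. Let N ≥ 1, L ≥ 2, and 0 ≤ D ≤ N, and let P : Fin N × Fin L → Fin n be a pattern matrix such that for all distinct column indices i ≠ i' in Fin L, the number of rows s ∈ Fin N with P(s, i) = P(s, i') is at most D. Define, for each i ∈ Fin L, the vector c_i : Fin N × Fin m → ℂ by c_i(s, r) = (1/√N)·A(r, P(s, i)). Then each c_i is a unit vector, and for all i ≠ i', |⟨c_i, c_{i'}⟩| ≤ (D + (N − D)·μ)/N; in particular, the coherence of the family (c_i)_{i ∈ Fin L} is at most (D + (N − D)·μ)/N. -/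
/-!
Each `c i` is `1/√N` times the concatenation of the unit columns `a (P s i)`, `s : Fin N`, so
`⟪c i, c i'⟫ = N⁻¹ * ∑ s, ⟪a (P s i), a (P s i')⟫`. At most `D` of these terms have
`P s i = P s i'` and are bounded by `1` (Cauchy–Schwarz); the others are bounded by `μ`.
Since `μ ≤ 1`, the worst case is exactly `D` coincidences.
-/

open scoped ComplexInnerProductSpace

section Stacking

variable {𝕜 ι κ : Type*} [RCLike 𝕜] [Fintype ι] [Fintype κ]

theorem inner_toLp_uncurry (f g : ι → EuclideanSpace 𝕜 κ) :
    inner 𝕜 (WithLp.toLp 2 fun p : ι × κ => f p.1 p.2)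
        (WithLp.toLp 2 fun p : ι × κ => g p.1 p.2) =
      ∑ i, inner 𝕜 (f i) (g i) := by
  simp only [PiLp.inner_apply, Fintype.sum_prod_type]

theorem norm_toLp_uncurry_sq (f : ι → EuclideanSpace 𝕜 κ) :
    ‖(WithLp.toLp 2 fun p : ι × κ => f p.1 p.2 : EuclideanSpace 𝕜 (ι × κ))‖ ^ 2 =
      ∑ i, ‖f i‖ ^ 2 := by
  simp only [EuclideanSpace.norm_sq_eq, Fintype.sum_prod_type]

end Stacking

theorem norm_sum_inner_le {𝕜 E α ι : Type*} [RCLike 𝕜] [NormedAddCommGroup E]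
    [InnerProductSpace 𝕜 E] [DecidableEq α] [Fintype ι] {a : α → E} (ha : ∀ j, ‖a j‖ = 1) {μ : ℝ}
    (hμ : μ ≤ 1) (hcoh : ∀ j j', j ≠ j' → ‖inner 𝕜 (a j) (a j')‖ ≤ μ) {p q : ι → α} {D : ℕ}
    (hD : (Finset.univ.filter fun s => p s = q s).card ≤ D) :
    ‖∑ s, inner 𝕜 (a (p s)) (a (q s))‖ ≤ D + (Fintype.card ι - D) * μ := by
  have hterm : ∀ s, ‖inner 𝕜 (a (p s)) (a (q s))‖ ≤ μ + (1 - μ) * if p s = q s then 1 else 0 := by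
    intro s
    split_ifs with h
    · simpa [ha] using norm_inner_le_norm (𝕜 := 𝕜) (a (p s)) (a (q s))
    · simpa using hcoh _ _ h
  have hD' : ((Finset.univ.filter fun s => p s = q s).card : ℝ) ≤ D := by exact_mod_cast hD
  calc ‖∑ s, inner 𝕜 (a (p s)) (a (q s))‖
      ≤ ∑ s, (μ + (1 - μ) * if p s = q s then 1 else 0) :=
        (norm_sum_le _ _).trans (Finset.sum_le_sum fun s _ => hterm s)
    _ = Fintype.card ι * μ + (1 - μ) * (Finset.univ.filter fun s => p s = q s).card := by
        rw [Finset.sum_add_distrib, ← Finset.mul_sum, Finset.sum_boole, Finset.sum_const,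
          Finset.card_univ, nsmul_eq_mul]
    _ ≤ Fintype.card ι * μ + (1 - μ) * D := by gcongr
    _ = D + (Fintype.card ι - D) * μ := by ring

theorem stmt8_general (m n N L D : ℕ) (hN : 1 ≤ N)
    (μ : ℝ) (hμ1 : μ ≤ 1)
    (a : Fin n → EuclideanSpace ℂ (Fin m))
    (ha : ∀ j, ‖a j‖ = 1)
    (hcoh : ∀ i j : Fin n, i ≠ j → ‖⟪a i, a j⟫‖ ≤ μ)
    (P : Fin N → Fin L → Fin n)
    (hP : ∀ i i' : Fin L, i ≠ i' →
      (Finset.univ.filter fun s : Fin N => P s i = P s i').card ≤ D)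
    (c : Fin L → EuclideanSpace ℂ (Fin N × Fin m))
    (hc : ∀ i, c i = WithLp.toLp 2 (fun sr : Fin N × Fin m => ((1 / Real.sqrt N : ℝ) : ℂ) * a (P sr.1 i) sr.2)) :
    (∀ i, ‖c i‖ = 1) ∧
    ∀ i i' : Fin L, i ≠ i' →
      ‖⟪c i, c i'⟫‖ ≤ ((D : ℝ) + ((N : ℝ) - D) * μ) / N := by
  set t : ℝ := 1 / Real.sqrt N
  have hc' : ∀ i,
      c i = (t : ℂ) • WithLp.toLp 2 (fun sr : Fin N × Fin m => a (P sr.1 i) sr.2) := by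
    intro i
    rw [hc]
    rfl
  have ht : t ^ 2 = (N : ℝ)⁻¹ := by simp [t]
  have hN0 : (N : ℝ) ≠ 0 := Nat.cast_ne_zero.mpr (Nat.one_le_iff_ne_zero.mp hN)
  constructor
  · intro i
    have hsq : ‖c i‖ ^ 2 = 1 := by
      rw [hc', norm_smul, mul_pow, norm_toLp_uncurry_sq fun s => a (P s i)]
      simp [ha, ht, hN0]
    exact (pow_eq_one_iff_of_nonneg (norm_nonneg _) two_ne_zero).mp hsq
  · intro i i' hii'
    have hscale : ‖(starRingEnd ℂ) (t : ℂ) * t‖ = (N : ℝ)⁻¹ := by simp [← ht, sq]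
    rw [hc', hc', inner_smul_left, inner_smul_right,
      inner_toLp_uncurry (fun s => a (P s i)) (fun s => a (P s i')), ← mul_assoc, norm_mul,
      hscale, inv_mul_eq_div]
    gcongr
    simpa using norm_sum_inner_le ha hμ1 hcoh (hP i i' hii')

theorem stmt8 (m n N L D : ℕ) (hN : 1 ≤ N) (hL : 2 ≤ L) (hD : D ≤ N)
    (μ : ℝ) (hμ0 : 0 ≤ μ) (hμ1 : μ ≤ 1)
    (a : Fin n → EuclideanSpace ℂ (Fin m))
    (ha : ∀ j, ‖a j‖ = 1)
    (hcoh : ∀ i j : Fin n, i ≠ j → ‖⟪a i, a j⟫‖ ≤ μ)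
    (P : Fin N → Fin L → Fin n)
    (hP : ∀ i i' : Fin L, i ≠ i' →
      (Finset.univ.filter fun s : Fin N => P s i = P s i').card ≤ D)
    (c : Fin L → EuclideanSpace ℂ (Fin N × Fin m))
    (hc : ∀ i, c i = WithLp.toLp 2 (fun sr : Fin N × Fin m => ((1 / Real.sqrt N : ℝ) : ℂ) * a (P sr.1 i) sr.2)) :
    (∀ i, ‖c i‖ = 1) ∧
    ∀ i i' : Fin L, i ≠ i' →
      ‖⟪c i, c i'⟫‖ ≤ ((D : ℝ) + ((N : ℝ) - D) * μ) / N :=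
  stmt8_general m n N L D hN μ hμ1 a ha hcoh P hP c hc
end

section
/- Let F be a finite field, k ≥ 1, and x : Fin k → F an injective map. For each pair (a, b) ∈ F × F define the binary vector v_{(a,b)} : Fin k × F → ℝ by v_{(a,b)}(i, λ) = 1 if a + b·x(i) = λ and v_{(a,b)}(i, λ) = 0 otherwise. Then each v_{(a,b)} has Euclidean norm √k, for distinct pairs (a,b) ≠ (a',b') the inner product ⟨v_{(a,b)}, v_{(a',b')}⟩ is at most 1, and the coherence of the family (v_{(a,b)})_{(a,b) ∈ F × F}—i.e., the maximum over distinct pairs of |⟨v_{(a,b)}, v_{(a',b')}⟩|/k—equals 1/k. -/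
/-!
Two vectors `v_(a,b)` and `v_(a',b')` share a nonzero coordinate `(i, λ)` exactly when the
lines `t ↦ a + b t` and `t ↦ a' + b' t` agree at the node `x i`, so their inner product counts
the nodes where the lines meet. Distinct lines meet at most once and the nodes are distinct,
which bounds it by `1`; a line itself meets all `k` nodes, and a constant line through one
node meets the line `t ↦ t` exactly there.
-/

open scoped RealInnerProductSpace
open Finset

noncomputable def graphIndicator {ι κ : Type*} [DecidableEq κ] (f : ι → κ) :
    EuclideanSpace ℝ (ι × κ) :=
  WithLp.toLp 2 fun p => if f p.1 = p.2 then 1 else 0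

section graphIndicator

variable {ι κ : Type*} [Fintype ι] [Fintype κ] [DecidableEq κ]

lemma inner_graphIndicator (f g : ι → κ) :
    ⟪graphIndicator f, graphIndicator g⟫ = #{i | f i = g i} := by
  simp only [graphIndicator, PiLp.inner_apply, RCLike.inner_apply, conj_trivial,
    Fintype.sum_prod_type, ite_mul, one_mul, zero_mul, sum_ite_eq, mem_univ, if_true,
    card_filter, Nat.cast_sum, Nat.cast_ite, Nat.cast_one, Nat.cast_zero]

lemma norm_graphIndicator (f : ι → κ) : ‖graphIndicator f‖ = √(Fintype.card ι) := by
  rw [norm_eq_sqrt_real_inner, inner_graphIndicator, filter_true_of_mem fun _ _ => rfl,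
    card_univ]

end graphIndicator

section AffineLines

variable {F : Type*} [Field F]

lemma subsingleton_setOf_add_mul_eq {a b a' b' : F} (h : (a, b) ≠ (a', b')) :
    {t : F | a + b * t = a' + b' * t}.Subsingleton := by
  intro s (hs : a + b * s = a' + b' * s) t (ht : a + b * t = a' + b' * t)
  have hb : b ≠ b' := by
    rintro rfl
    exact h (by simpa using hs)
  have : (b - b') * s = (b - b') * t := by linear_combination hs - ht
  exact mul_left_cancel₀ (sub_ne_zero.mpr hb) this

variable {ι : Type*} [Fintype ι] [DecidableEq F] {x : ι → F}

lemma card_filter_add_mul_eq_le_one (hx : Function.Injective x) {a b a' b' : F}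
    (h : (a, b) ≠ (a', b')) : #{i | a + b * x i = a' + b' * x i} ≤ 1 :=
  card_le_one.mpr fun _ hi _ hj =>
    hx <| subsingleton_setOf_add_mul_eq h (mem_filter.mp hi).2 (mem_filter.mp hj).2

lemma filter_const_eq_id (hx : Function.Injective x) (i₀ : ι) :
    ({i | x i₀ + 0 * x i = 0 + 1 * x i} : Finset ι) = {i₀} := by
  ext i
  simp [hx.eq_iff, eq_comm]

end AffineLines

theorem stmt9 {F : Type*} [Field F] [Fintype F] [DecidableEq F]
    (k : ℕ) (hk : 1 ≤ k) (x : Fin k → F) (hx : Function.Injective x)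
    (v : F × F → EuclideanSpace ℝ (Fin k × F))
    (hv : ∀ a b : F, v (a, b) =
      WithLp.toLp 2 (fun il : Fin k × F => if a + b * x il.1 = il.2 then (1 : ℝ) else 0)) :
    (∀ q, ‖v q‖ = Real.sqrt k) ∧
    (∀ q q' : F × F, q ≠ q' → ⟪v q, v q'⟫ ≤ 1) ∧
    (∀ q q' : F × F, q ≠ q' → |⟪v q, v q'⟫| / (k : ℝ) ≤ 1 / k) ∧
    (∃ q q' : F × F, q ≠ q' ∧ |⟪v q, v q'⟫| / (k : ℝ) = 1 / k) := by
  have hv' (q : F × F) : v q = graphIndicator fun i => q.1 + q.2 * x i := hv q.1 q.2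
  have inner_le (q q' : F × F) (h : q ≠ q') : ⟪v q, v q'⟫ ≤ 1 := by
    rw [hv', hv', inner_graphIndicator]
    exact_mod_cast card_filter_add_mul_eq_le_one hx h
  have abs_inner (q q' : F × F) : |⟪v q, v q'⟫| = ⟪v q, v q'⟫ := by
    rw [hv', hv', inner_graphIndicator, Nat.abs_cast]
  refine ⟨fun q => by rw [hv', norm_graphIndicator, Fintype.card_fin], inner_le,
    fun q q' h => by gcongr; exact (abs_inner q q').trans_le (inner_le q q' h), ?_⟩
  let i₀ : Fin k := ⟨0, hk⟩
  refine ⟨(x i₀, 0), (0, 1), by simp, ?_⟩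
  rw [abs_inner, hv', hv', inner_graphIndicator, filter_const_eq_id hx, card_singleton,
    Nat.cast_one]
end

section
/- Let p be a prime, let F be a finite field with p³ elements, let β : F → (ZMod p)³ be any bijection, and let y : Fin p → F be any injective map. Define the complex matrix C of size p³ × p⁶ whose rows are indexed by pairs (s, (φ, γ)) ∈ Fin p × (ZMod p)² and whose columns are indexed by pairs (u, v) ∈ F × F, with entries C((s,(φ,γ)), (u,v)) = (1/(p·√p))·e_p(γ·(a·φ + c) + b·φ), where (a, b, c) = β(u + v·y(s)). Then every column of C is a unit vector in ℂ^{p³}, and the coherence of C is at most (2p − 1)/p². -/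
/-!
Row block `s` of column `(u, v)` is the function `(φ, γ) ↦ e_p(γ(aφ + c) + bφ)` with
`(a, b, c) = β (u + v y_s)`, and this is additive in `(a, b, c)`, so the inner product of two
columns is `p⁻³` times a sum over `s` of double character sums of the parameter differences.
Such a double sum is `p²` at the zero parameter and has modulus at most `p` otherwise: summing over
`γ` leaves only the `φ` with `aφ + c = 0`; there is one if `a ≠ 0`, none if `a = 0 ≠ c`, and if
`a = c = 0` the remaining sum of `e_p(bφ)` vanishes because `b ≠ 0`.
Two distinct lines `s ↦ u + v y_s` meet in at most one point, so at most one `s` contributes `p²`,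
and `|⟪C q, C q'⟫| ≤ p⁻³ ((p - 1) p + p²) = (2p - 1) / p²`.
-/

open scoped ComplexInnerProductSpace

open Finset

section Chirp

variable {K : Type*} [Field K] [Fintype K] {ι : Type*} [Fintype ι]

def chirpSum (ψ : AddChar K ℂ) (t : K × K × K) : ℂ :=
  ∑ φ : K, ∑ γ : K, ψ (γ * (t.1 * φ + t.2.2) + t.2.1 * φ)

lemma norm_chirpSum_le_card_sq (ψ : AddChar K ℂ) (t : K × K × K) :
    ‖chirpSum ψ t‖ ≤ (Fintype.card K : ℝ) ^ 2 := by
  calc ‖chirpSum ψ t‖ ≤ ∑ _φ : K, ∑ _γ : K, (1 : ℝ) :=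
        norm_sum_le_of_le _ fun φ _ => norm_sum_le_of_le _ fun γ _ => (ψ.norm_apply _).le
    _ = (Fintype.card K : ℝ) ^ 2 := by simp [sq]

lemma chirpSum_eq_sum_ite [DecidableEq K] {ψ : AddChar K ℂ} (hψ : ψ.IsPrimitive) (d e f : K) :
    chirpSum ψ (d, e, f) =
      ∑ φ : K, (if d * φ + f = 0 then (Fintype.card K : ℂ) else 0) * ψ (e * φ) := by
  simp_rw [chirpSum, AddChar.map_add_eq_mul, ← sum_mul, AddChar.sum_mulShift _ hψ, Nat.cast_ite,
    Nat.cast_zero]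

lemma norm_chirpSum_le_card {ψ : AddChar K ℂ} (hψ : ψ.IsPrimitive) {t : K × K × K}
    (ht : t ≠ 0) : ‖chirpSum ψ t‖ ≤ Fintype.card K := by
  classical
  obtain ⟨d, e, f⟩ := t
  rw [chirpSum_eq_sum_ite hψ]
  by_cases hd : d = 0
  · suffices (if f = 0 then (Fintype.card K : ℂ) else 0) * ∑ φ : K, ψ (φ * e) = 0 by
      simp_rw [hd, zero_mul, zero_add, ← mul_sum, mul_comm e, this, norm_zero]
      positivity
    by_cases hf : f = 0
    · have he : e ≠ 0 := by rintro rfl; exact ht (by simp [hd, hf])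
      rw [AddChar.sum_mulShift _ hψ, if_neg he, Nat.cast_zero, mul_zero]
    · rw [if_neg hf, zero_mul]
  · have hroot : ∀ φ, d * φ + f = 0 ↔ φ = -f / d := fun φ => by
      rw [eq_div_iff hd, add_eq_zero_iff_eq_neg, mul_comm]
    simp_rw [hroot, ite_mul, zero_mul, sum_ite_eq', mem_univ, if_true, norm_mul,
      ψ.norm_apply, mul_one, Complex.norm_natCast, le_refl]

def chirpVec (ψ : AddChar K ℂ) (c : ℝ) (t : ι → K × K × K) : EuclideanSpace ℂ (ι × (K × K)) :=
  WithLp.toLp 2 fun row => (c : ℂ) *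
    ψ (row.2.2 * ((t row.1).1 * row.2.1 + (t row.1).2.2) + (t row.1).2.1 * row.2.1)

lemma norm_chirpVec_sq (ψ : AddChar K ℂ) (c : ℝ) (t : ι → K × K × K) :
    ‖chirpVec ψ c t‖ ^ 2 = c ^ 2 * (Fintype.card ι * Fintype.card K ^ 2) := by
  rw [chirpVec, EuclideanSpace.norm_sq_eq]
  simp only [norm_mul, Complex.norm_real, ψ.norm_apply, mul_one, Real.norm_eq_abs, sq_abs,
    sum_const, card_univ, Fintype.card_prod, nsmul_eq_mul]
  push_cast
  ring

lemma inner_chirpVec (ψ : AddChar K ℂ) (c : ℝ) (t t' : ι → K × K × K) :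
    ⟪chirpVec ψ c t, chirpVec ψ c t'⟫ = (c : ℂ) ^ 2 * ∑ i, chirpSum ψ (t' i - t i) := by
  have hterm : ∀ (a a' : K × K × K) (φ γ : K),
      starRingEnd ℂ ((c : ℂ) * ψ (γ * (a.1 * φ + a.2.2) + a.2.1 * φ)) *
        ((c : ℂ) * ψ (γ * (a'.1 * φ + a'.2.2) + a'.2.1 * φ)) =
      (c : ℂ) ^ 2 * ψ (γ * ((a' - a).1 * φ + (a' - a).2.2) + (a' - a).2.1 * φ) := by
    intro a a' φ γ
    rw [map_mul, Complex.conj_ofReal, ← AddChar.map_neg_eq_conj, mul_mul_mul_comm,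
      ← AddChar.map_add_eq_mul, ← sq, Prod.fst_sub, Prod.snd_sub, Prod.fst_sub, Prod.snd_sub]
    ring_nf
  simp only [chirpVec, chirpSum, PiLp.inner_apply, RCLike.inner_apply', Fintype.sum_prod_type,
    hterm, mul_sum]

lemma norm_inner_chirpVec_le [DecidableEq K] {ψ : AddChar K ℂ} (hψ : ψ.IsPrimitive) (c : ℝ)
    (t t' : ι → K × K × K) :
    ‖⟪chirpVec ψ c t, chirpVec ψ c t'⟫‖ ≤
      c ^ 2 * (Fintype.card ι * Fintype.card K +
        #{i | t i = t' i} * ((Fintype.card K : ℝ) ^ 2 - Fintype.card K)) := by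
  set q : ℝ := (Fintype.card K : ℝ)
  have hterm : ∀ i, ‖chirpSum ψ (t' i - t i)‖ ≤ q + if t i = t' i then q ^ 2 - q else 0 := by
    intro i
    by_cases h : t i = t' i
    · rw [if_pos h, add_sub_cancel]
      exact norm_chirpSum_le_card_sq ψ _
    · rw [if_neg h, add_zero]
      exact norm_chirpSum_le_card hψ (sub_ne_zero.2 (Ne.symm h))
  rw [inner_chirpVec, norm_mul, norm_pow, Complex.norm_real, Real.norm_eq_abs, sq_abs]
  refine mul_le_mul_of_nonneg_left ((norm_sum_le_of_le _ fun i _ => hterm i).trans_eq ?_)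
    (sq_nonneg c)
  rw [sum_add_distrib, sum_const, card_univ, nsmul_eq_mul, sum_ite, sum_const_zero, add_zero,
    sum_const, nsmul_eq_mul]

end Chirp

lemma card_filter_add_mul_eq_le_one_s10 {F : Type*} [Field F] [DecidableEq F] {ι : Type*}
    [Fintype ι] {y : ι → F} (hy : Function.Injective y) {u v u' v' : F}
    (h : (u, v) ≠ (u', v')) : #{s | u + v * y s = u' + v' * y s} ≤ 1 := by
  refine card_le_one.2 fun s₁ h₁ s₂ h₂ => ?_
  rw [mem_filter] at h₁ h₂
  by_cases hv : v = v'
  · subst hv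
    exact absurd (by rw [add_right_cancel h₁.2]) h
  · exact hy (mul_left_cancel₀ (sub_ne_zero.2 hv) (by linear_combination h₁.2 - h₂.2))

theorem stmt10_general (p : ℕ) (hp : p.Prime) [NeZero p]
    {F : Type*} [Field F] [Fintype F]
    (β : F → ZMod p × ZMod p × ZMod p) (hβ : Function.Bijective β)
    (y : Fin p → F) (hy : Function.Injective y)
    (C : F × F → EuclideanSpace ℂ (Fin p × (ZMod p × ZMod p)))
    (hC : ∀ u v : F, C (u, v) = WithLp.toLp 2 (fun row =>
      ((1 / ((p : ℝ) * Real.sqrt p) : ℝ) : ℂ) *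
        ep p (row.2.2 * ((β (u + v * y row.1)).1 * row.2.1 + (β (u + v * y row.1)).2.2) +
          (β (u + v * y row.1)).2.1 * row.2.1))) :
    (∀ q, ‖C q‖ = 1) ∧
    ∀ q q' : F × F, q ≠ q' →
      ‖⟪C q, C q'⟫‖ ≤ (2 * (p : ℝ) - 1) / (p : ℝ) ^ 2 := by
  classical
  have := Fact.mk hp
  set c : ℝ := 1 / ((p : ℝ) * Real.sqrt p)
  have hp0 : (0 : ℝ) < p := by exact_mod_cast hp.pos
  have hc : c ^ 2 = 1 / (p : ℝ) ^ 3 := by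
    rw [div_pow, one_pow, mul_pow, Real.sq_sqrt hp0.le]; ring
  have hCvec : ∀ u v, C (u, v) = chirpVec ZMod.stdAddChar c fun s => β (u + v * y s) := by
    intro u v
    simp only [hC, chirpVec, ep_eq_stdAddChar]
  constructor
  · rintro ⟨u, v⟩
    have h := norm_chirpVec_sq ZMod.stdAddChar c fun s => β (u + v * y s)
    rw [← hCvec, hc, Fintype.card_fin, ZMod.card] at h
    field_simp at h
    exact (pow_eq_one_iff_of_nonneg (norm_nonneg _) two_ne_zero).1 h
  · rintro ⟨u, v⟩ ⟨u', v'⟩ hne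
    have hbad := card_filter_add_mul_eq_le_one_s10 hy hne
    rw [hCvec, hCvec]
    refine (norm_inner_chirpVec_le (ZMod.isPrimitive_stdAddChar p) c _ _).trans ?_
    simp only [hβ.1.eq_iff, Fintype.card_fin, ZMod.card, hc]
    have hp1 : (1 : ℝ) ≤ p := by exact_mod_cast hp.one_lt.le
    calc _ ≤ 1 / (p : ℝ) ^ 3 * (p * p + 1 * ((p : ℝ) ^ 2 - p)) := by
          gcongr
          · nlinarith
          · exact_mod_cast hbad
      _ = (2 * (p : ℝ) - 1) / (p : ℝ) ^ 2 := by
          field_simp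
          ring

theorem stmt10 (p : ℕ) (hp : p.Prime) [NeZero p]
    {F : Type*} [Field F] [Fintype F] (hF : Fintype.card F = p ^ 3)
    (β : F → ZMod p × ZMod p × ZMod p) (hβ : Function.Bijective β)
    (y : Fin p → F) (hy : Function.Injective y)
    (C : F × F → EuclideanSpace ℂ (Fin p × (ZMod p × ZMod p)))
    (hC : ∀ u v : F, C (u, v) = WithLp.toLp 2 (fun row =>
      ((1 / ((p : ℝ) * Real.sqrt p) : ℝ) : ℂ) *
        ep p (row.2.2 * ((β (u + v * y row.1)).1 * row.2.1 + (β (u + v * y row.1)).2.2) +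
          (β (u + v * y row.1)).2.1 * row.2.1))) :
    (∀ q, ‖C q‖ = 1) ∧
    ∀ q q' : F × F, q ≠ q' →
      ‖⟪C q, C q'⟫‖ ≤ (2 * (p : ℝ) - 1) / (p : ℝ) ^ 2 :=
  stmt10_general p hp β hβ y hy C hC
end

section
/- (Welch bound) Let m ≥ 1 and n > m, and let v_1, …, v_n be unit vectors in ℂ^m (at least two of them). Then max_{i ≠ j} |⟨v_i, v_j⟩| ≥ √((n − m)/(m·(n − 1))); i.e., the coherence of any m × n complex matrix with unit-norm columns is at least √((n − m)/(m·(n − 1))). -/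
/-! The Gram matrix `AᴴA` of the vectors and their frame operator `AAᴴ` have the same Frobenius
norm and the same trace `n`. Cauchy–Schwarz on the diagonal of the `m × m` frame operator gives
`∑ᵢⱼ ‖⟪vᵢ, vⱼ⟫‖² ≥ n² / m`. The diagonal of the Gram matrix contributes only `n`, so the
`n (n - 1)` off-diagonal entries carry at least `n² / m - n`, and one of them is at least
`(n - m) / (m (n - 1))`. -/

open scoped ComplexInnerProductSpace

open Finset Matrix Module
open scoped InnerProductSpace

theorem Finset.sum_sum_eq_sum_add_sum_offDiag {ι M : Type*} [DecidableEq ι] [AddCommMonoid M]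
    (s : Finset ι) (f : ι → ι → M) :
    ∑ i ∈ s, ∑ j ∈ s, f i j = ∑ i ∈ s, f i i + ∑ p ∈ s.offDiag, f p.1 p.2 := by
  rw [← sum_product', ← diag_union_offDiag, sum_union (disjoint_diag_offDiag s), sum_diag]

section
variable {𝕜 ι κ : Type*} [RCLike 𝕜] [Fintype ι] [Fintype κ]

theorem Matrix.trace_mul_conjTranspose_self_eq_sum_norm_sq (A : Matrix κ ι 𝕜) :
    (A * Aᴴ).trace = ((∑ a, ∑ i, ‖A a i‖ ^ 2 : ℝ) : 𝕜) := by
  simp [Matrix.trace, Matrix.mul_apply, RCLike.mul_conj]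

theorem Matrix.sum_norm_sq_conjTranspose_mul_self_eq (A : Matrix κ ι 𝕜) :
    ∑ i, ∑ j, ‖(Aᴴ * A) i j‖ ^ 2 = ∑ a, ∑ b, ‖(A * Aᴴ) a b‖ ^ 2 := by
  apply RCLike.ofReal_injective (K := 𝕜)
  rw [← trace_mul_conjTranspose_self_eq_sum_norm_sq, ← trace_mul_conjTranspose_self_eq_sum_norm_sq,
    conjTranspose_mul, conjTranspose_mul, conjTranspose_conjTranspose]
  simp only [Matrix.mul_assoc]
  rw [trace_mul_comm Aᴴ]
  simp only [Matrix.mul_assoc]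

theorem Matrix.norm_trace_sq_le_card_mul_sum_norm_sq (M : Matrix κ κ 𝕜) :
    ‖M.trace‖ ^ 2 ≤ Fintype.card κ * ∑ a, ∑ b, ‖M a b‖ ^ 2 :=
  calc ‖M.trace‖ ^ 2 ≤ (∑ a, ‖M a a‖) ^ 2 := by gcongr; exact norm_sum_le _ _
    _ ≤ Fintype.card κ * ∑ a, ‖M a a‖ ^ 2 := sq_sum_le_card_mul_sum_sq
    _ ≤ Fintype.card κ * ∑ a, ∑ b, ‖M a b‖ ^ 2 := by
      gcongr with a
      exact single_le_sum (f := fun b ↦ ‖M a b‖ ^ 2) (fun b _ ↦ sq_nonneg _) (mem_univ a)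

theorem EuclideanSpace.sq_sum_norm_sq_le_card_mul_sum_norm_inner_sq
    (v : ι → EuclideanSpace 𝕜 κ) :
    (∑ i, ‖v i‖ ^ 2) ^ 2 ≤ Fintype.card κ * ∑ i, ∑ j, ‖⟪v i, v j⟫_𝕜‖ ^ 2 := by
  set A : Matrix κ ι 𝕜 := Matrix.of fun a i ↦ v i a
  have hgram : ∀ i j, (Aᴴ * A) i j = ⟪v i, v j⟫_𝕜 := by
    intro i j
    simp [A, Matrix.mul_apply, PiLp.inner_apply, mul_comm]
  have htrace : (A * Aᴴ).trace = ((∑ i, ‖v i‖ ^ 2 : ℝ) : 𝕜) := by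
    rw [trace_mul_conjTranspose_self_eq_sum_norm_sq, sum_comm]
    simp [A, EuclideanSpace.norm_sq_eq]
  calc (∑ i, ‖v i‖ ^ 2) ^ 2 = ‖(A * Aᴴ).trace‖ ^ 2 := by
        rw [htrace, RCLike.norm_ofReal, abs_of_nonneg (by positivity)]
    _ ≤ Fintype.card κ * ∑ a, ∑ b, ‖(A * Aᴴ) a b‖ ^ 2 := norm_trace_sq_le_card_mul_sum_norm_sq _
    _ = Fintype.card κ * ∑ i, ∑ j, ‖⟪v i, v j⟫_𝕜‖ ^ 2 := by
        simp only [← sum_norm_sq_conjTranspose_mul_self_eq, hgram]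

variable {E : Type*} [NormedAddCommGroup E] [InnerProductSpace 𝕜 E] [FiniteDimensional 𝕜 E]

theorem sq_sum_norm_sq_le_finrank_mul_sum_norm_inner_sq (v : ι → E) :
    (∑ i, ‖v i‖ ^ 2) ^ 2 ≤ finrank 𝕜 E * ∑ i, ∑ j, ‖⟪v i, v j⟫_𝕜‖ ^ 2 := by
  simpa [LinearIsometryEquiv.norm_map, LinearIsometryEquiv.inner_map_map] using
    EuclideanSpace.sq_sum_norm_sq_le_card_mul_sum_norm_inner_sq
      fun i ↦ (stdOrthonormalBasis 𝕜 E).repr (v i)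

theorem card_mul_sub_finrank_le_finrank_mul_sum_norm_inner_sq_offDiag [DecidableEq ι]
    {v : ι → E} (hv : ∀ i, ‖v i‖ = 1) :
    (Fintype.card ι : ℝ) * (Fintype.card ι - finrank 𝕜 E) ≤
      finrank 𝕜 E * ∑ p ∈ univ.offDiag, ‖⟪v p.1, v p.2⟫_𝕜‖ ^ 2 := by
  have := sq_sum_norm_sq_le_finrank_mul_sum_norm_inner_sq (𝕜 := 𝕜) v
  simp only [hv, one_pow, sum_const, card_univ, nsmul_eq_mul, mul_one,
    sum_sum_eq_sum_add_sum_offDiag, inner_self_eq_norm_sq_to_K, map_one, norm_one] at this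
  linarith

theorem exists_ne_le_norm_inner_sq_of_finrank_lt {v : ι → E} (hv : ∀ i, ‖v i‖ = 1)
    (hlt : finrank 𝕜 E < Fintype.card ι) :
    ∃ i j, i ≠ j ∧ ((Fintype.card ι : ℝ) - finrank 𝕜 E) /
      (finrank 𝕜 E * ((Fintype.card ι : ℝ) - 1)) ≤ ‖⟪v i, v j⟫_𝕜‖ ^ 2 := by
  classical
  have hsum := card_mul_sub_finrank_le_finrank_mul_sum_norm_inner_sq_offDiag (𝕜 := 𝕜) hv
  set n : ℕ := Fintype.card ι
  set m : ℕ := finrank 𝕜 E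
  have hm : 0 < m := Nat.pos_of_ne_zero fun h ↦ by
    have hn₀ : (0 : ℝ) < n := by exact_mod_cast Nat.zero_lt_of_lt hlt
    simp only [h, CharP.cast_eq_zero, sub_zero, zero_mul] at hsum
    nlinarith
  have hn : (1 : ℝ) < n := by exact_mod_cast Nat.lt_of_le_of_lt hm hlt
  have hcard : ((univ : Finset ι).offDiag.card : ℝ) = n * (n - 1) := by
    rw [offDiag_card, Nat.cast_sub (Nat.le_mul_self _)]
    push_cast [card_univ]
    ring
  have hne : (univ : Finset ι).offDiag.Nonempty := by
    have hcard_pos : (0 : ℝ) < (univ : Finset ι).offDiag.card := by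
      rw [hcard]
      exact mul_pos (by linarith) (by linarith)
    exact card_pos.1 (by exact_mod_cast hcard_pos)
  obtain ⟨p, hp, hle⟩ := exists_le_of_sum_le hne (f := fun _ ↦ ((n : ℝ) - m) / (m * (n - 1)))
    (g := fun p ↦ ‖⟪v p.1, v p.2⟫_𝕜‖ ^ 2) <| by
      have hn' : (n : ℝ) - 1 ≠ 0 := by linarith
      rw [sum_const, nsmul_eq_mul, hcard, show (n : ℝ) * (n - 1) * ((n - m) / (m * (n - 1))) = n * (n - m) / m by
        field_simp, div_le_iff₀' (by exact_mod_cast hm)]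
      exact hsum
  exact ⟨p.1, p.2, (mem_offDiag.1 hp).2.2, hle⟩

end

theorem stmt12_general (m n : ℕ) (hmn : m < n)
    (v : Fin n → EuclideanSpace ℂ (Fin m)) (hv : ∀ i, ‖v i‖ = 1) :
    ∃ i j : Fin n, i ≠ j ∧
      Real.sqrt (((n : ℝ) - m) / ((m : ℝ) * ((n : ℝ) - 1))) ≤ ‖⟪v i, v j⟫‖ := by
  obtain ⟨i, j, hij, hle⟩ :=
    exists_ne_le_norm_inner_sq_of_finrank_lt (𝕜 := ℂ) hv (by simpa using hmn)
  refine ⟨i, j, hij, ?_⟩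
  simpa using Real.sqrt_le_sqrt hle

theorem stmt12 (m n : ℕ) (hm : 1 ≤ m) (hmn : m < n)
    (v : Fin n → EuclideanSpace ℂ (Fin m)) (hv : ∀ i, ‖v i‖ = 1) :
    ∃ i j : Fin n, i ≠ j ∧
      Real.sqrt (((n : ℝ) - m) / ((m : ℝ) * ((n : ℝ) - 1))) ≤ ‖⟪v i, v j⟫‖ :=
  stmt12_general m n hmn v hv
end

section
/- Let A be an m × n complex matrix whose columns a_1, …, a_n are unit vectors and satisfy |⟨a_i, a_j⟩| ≤ μ for all i ≠ j, where μ ≥ 0. Then for every k ≥ 1 and every vector x ∈ ℂ^n with at most k nonzero entries, (1 − (k − 1)·μ)·‖x‖² ≤ ‖A x‖² ≤ (1 + (k − 1)·μ)·‖x‖²; i.e., A satisfies the Restricted Isometry Property of order k with constant (k − 1)·μ. -/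
open scoped ComplexInnerProductSpace

theorem stmt13 (m n : ℕ)
    (a : Fin n → EuclideanSpace ℂ (Fin m))
    (ha : ∀ j, ‖a j‖ = 1)
    (μ : ℝ) (hμ : 0 ≤ μ)
    (hcoh : ∀ i j : Fin n, i ≠ j → ‖⟪a i, a j⟫‖ ≤ μ)
    (k : ℕ) (hk : 1 ≤ k)
    (x : EuclideanSpace ℂ (Fin n))
    (hx : (Finset.univ.filter fun j : Fin n => x j ≠ 0).card ≤ k) :
    (1 - ((k : ℝ) - 1) * μ) * ‖x‖ ^ 2 ≤ ‖∑ j : Fin n, x j • a j‖ ^ 2 ∧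
    ‖∑ j : Fin n, x j • a j‖ ^ 2 ≤ (1 + ((k : ℝ) - 1) * μ) * ‖x‖ ^ 2 := by
  classical
  set S := Finset.univ.filter fun j : Fin n => x j ≠ 0 with hS
  set f : Fin n → ℝ := fun j => ‖x j‖ with hf
  have hx2 : ‖x‖ ^ 2 = ∑ j, f j ^ 2 := by
    rw [EuclideanSpace.norm_eq, Real.sq_sqrt (by positivity)]
  -- expansion of the squared norm
  have hexp : ‖∑ j : Fin n, x j • a j‖ ^ 2 =
      ∑ i, ∑ j, (((starRingEnd ℂ) (x i)) * x j * ⟪a i, a j⟫).re := by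
    rw [← @inner_self_eq_norm_sq ℂ, sum_inner, map_sum]
    refine Finset.sum_congr rfl fun i _ => ?_
    rw [inner_sum, map_sum]
    refine Finset.sum_congr rfl fun j _ => ?_
    rw [inner_smul_left, inner_smul_right, mul_assoc]
    rfl
  have hdiag : ∀ i : Fin n, (((starRingEnd ℂ) (x i)) * x i * ⟪a i, a i⟫).re = f i ^ 2 := by
    intro i
    have h1 : ⟪a i, a i⟫ = 1 := by
      rw [@inner_self_eq_norm_sq_to_K ℂ, ha i]; norm_num
    have h2 : (starRingEnd ℂ) (x i) * x i = (Complex.normSq (x i) : ℂ) := by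
      rw [mul_comm, Complex.mul_conj]
    rw [h1, mul_one, h2, Complex.ofReal_re, Complex.normSq_eq_norm_sq]
  -- split diagonal and off-diagonal
  have hsplit : ‖∑ j : Fin n, x j • a j‖ ^ 2 = ∑ j, f j ^ 2 +
      ∑ i, ∑ j ∈ Finset.univ.erase i, (((starRingEnd ℂ) (x i)) * x j * ⟪a i, a j⟫).re := by
    rw [hexp]
    have : ∀ i : Fin n, ∑ j, (((starRingEnd ℂ) (x i)) * x j * ⟪a i, a j⟫).re
        = f i ^ 2 + ∑ j ∈ Finset.univ.erase i, (((starRingEnd ℂ) (x i)) * x j * ⟪a i, a j⟫).re := by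
      intro i
      rw [← Finset.add_sum_erase _ _ (Finset.mem_univ i), hdiag i]
    rw [Finset.sum_congr rfl fun i _ => this i, Finset.sum_add_distrib]
  set T := ∑ i, ∑ j ∈ Finset.univ.erase i, (((starRingEnd ℂ) (x i)) * x j * ⟪a i, a j⟫).re with hT
  -- bound on |T|
  have hTle : |T| ≤ μ * ((∑ j, f j) ^ 2 - ∑ j, f j ^ 2) := by
    have h1 : |T| ≤ ∑ i, ∑ j ∈ Finset.univ.erase i, μ * (f i * f j) := by
      refine (Finset.abs_sum_le_sum_abs _ _).trans ?_
      refine Finset.sum_le_sum fun i _ => ?_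
      refine (Finset.abs_sum_le_sum_abs _ _).trans ?_
      refine Finset.sum_le_sum fun j hj => ?_
      have hij : i ≠ j := (Finset.ne_of_mem_erase hj).symm
      calc |(((starRingEnd ℂ) (x i)) * x j * ⟪a i, a j⟫).re|
          ≤ ‖((starRingEnd ℂ) (x i)) * x j * ⟪a i, a j⟫‖ := Complex.abs_re_le_norm _
        _ = f i * f j * ‖⟪a i, a j⟫‖ := by simp [f, norm_mul]
        _ ≤ f i * f j * μ := by
            exact mul_le_mul_of_nonneg_left (hcoh i j hij) (by positivity)
        _ = μ * (f i * f j) := by ring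
    refine h1.trans_eq ?_
    have e1 : ∀ i : Fin n, ∑ j ∈ Finset.univ.erase i, μ * (f i * f j)
        = μ * (f i * (∑ j, f j) - f i ^ 2) := by
      intro i
      rw [← Finset.mul_sum, ← Finset.mul_sum, Finset.sum_erase_eq_sub (Finset.mem_univ i)]
      ring
    rw [Finset.sum_congr rfl fun i _ => e1 i, ← Finset.mul_sum]
    congr 1
    rw [Finset.sum_sub_distrib, ← Finset.sum_mul]
    ring
  -- Cauchy-Schwarz on support
  have hsupp : ∑ j, f j = ∑ j ∈ S, f j := by
    refine (Finset.sum_subset (Finset.subset_univ S) fun j _ hj => ?_).symm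
    simp only [hS, Finset.mem_filter, Finset.mem_univ, true_and, not_not] at hj
    simp [f, hj]
  have hCS : (∑ j, f j) ^ 2 ≤ (k : ℝ) * ∑ j, f j ^ 2 := by
    rw [hsupp]
    calc (∑ j ∈ S, f j) ^ 2 ≤ (S.card : ℝ) * ∑ j ∈ S, f j ^ 2 :=
          sq_sum_le_card_mul_sum_sq
      _ ≤ (k : ℝ) * ∑ j, f j ^ 2 := by
          refine mul_le_mul (by exact_mod_cast hx)
            (Finset.sum_le_sum_of_subset_of_nonneg (Finset.subset_univ S)
              fun j _ _ => by positivity) (by positivity) (by positivity)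
  have hTbound : |T| ≤ ((k : ℝ) - 1) * μ * ∑ j, f j ^ 2 := by
    refine hTle.trans ?_
    have : μ * ((∑ j, f j) ^ 2 - ∑ j, f j ^ 2)
        ≤ μ * ((k : ℝ) * ∑ j, f j ^ 2 - ∑ j, f j ^ 2) := by
      apply mul_le_mul_of_nonneg_left _ hμ
      linarith
    refine this.trans_eq ?_
    ring
  have habs := abs_le.mp hTbound
  rw [hsplit, hx2]
  constructor <;> nlinarith [habs.1, habs.2]
end
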